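/- arXiv:2506.07098 — 2 statements merged into one kernel-verified Lean document; each statement's English description precedes it below -/
import Mathlib

section
/- Let K be a field and B a commutative K-algebra that is finite-dimensional as a K-vector space with nondegenerate trace form over K. Then B is an étale K-algebra (formally étale and of finite presentation over K). -/
universe u

/-! A nilpotent `x` makes every `x * y` nilpotent, hence of trace zero, so nondegeneracy of the
trace form forces `B` to be reduced. Being finite over a field, `B` is then a finite product of
fields `B ⧸ 𝔪`. The trace of a product is the sum of the traces, so the trace form of each
factor is nondegenerate, which for a finite field extension means separable; a finite product of
finite separable extensions is étale. -/

open Module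

namespace Algebra

theorem trace_pi {R : Type*} [CommRing R] {ι : Type*} [Fintype ι] (A : ι → Type*)
    [∀ i, CommRing (A i)] [∀ i, Algebra R (A i)] [∀ i, Free R (A i)] [∀ i, Module.Finite R (A i)]
    (x : Π i, A i) :
    trace R (Π i, A i) x = ∑ i, trace R (A i) (x i) := by
  classical
  let b i := Free.chooseBasis R (A i)
  rw [trace_eq_matrix_trace (Pi.basis b), Matrix.trace, ← Finset.univ_sigma_univ,
    Finset.sum_sigma]
  refine Finset.sum_congr rfl fun i _ => ?_
  rw [trace_eq_matrix_trace (b i), Matrix.trace]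
  refine Finset.sum_congr rfl fun j _ => ?_
  simp [leftMulMatrix_eq_repr_mul, Pi.basis_apply, Pi.basis_repr]

theorem traceForm_nondegenerate_of_algEquiv {R A B : Type*} [CommRing R] [CommRing A]
    [CommRing B] [Algebra R A] [Algebra R B] (e : A ≃ₐ[R] B)
    (h : (traceForm R A).Nondegenerate) : (traceForm R B).Nondegenerate := by
  have hcongr : LinearMap.BilinForm.congr e.toLinearEquiv (traceForm R A) = traceForm R B := by
    ext x y
    simp [← map_mul, trace_eq_of_algEquiv]
  exact hcongr ▸ h.congr e.toLinearEquiv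

theorem traceForm_nondegenerate_of_pi {R : Type*} [CommRing R] {ι : Type*} [Finite ι]
    {A : ι → Type*} [∀ i, CommRing (A i)] [∀ i, Algebra R (A i)]
    [∀ i, Free R (A i)] [∀ i, Module.Finite R (A i)]
    (h : (traceForm R (Π i, A i)).Nondegenerate) (i : ι) :
    (traceForm R (A i)).Nondegenerate := by
  classical
  have := Fintype.ofFinite ι
  have hrefl : LinearMap.IsRefl (traceForm R (A i)) := (traceForm_isSymm R).isRefl
  refine hrefl.nondegenerate_iff_separatingLeft.mpr fun z hz => ?_
  suffices Pi.single i z = 0 by simpa using congrFun this i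
  refine h.1 _ fun y => ?_
  rw [traceForm_apply, trace_pi, ← Pi.single_mul_left, Finset.sum_eq_single i]
  · simpa using hz (y i)
  · intro j _ hj
    simp [Pi.single_eq_of_ne hj]
  · simp

theorem isReduced_of_traceForm_nondegenerate {R B : Type*} [CommRing R] [IsReduced R]
    [CommRing B] [Algebra R B] (h : (traceForm R B).Nondegenerate) : IsReduced B := by
  refine ⟨fun x hx => h.1 x fun y => ?_⟩
  rw [traceForm_apply]
  exact (isNilpotent_trace_of_isNilpotent ((Commute.all x y).isNilpotent_mul_right hx)).eq_zero

end Algebra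

attribute [local instance] Ideal.Quotient.field in
/-- A finite-dimensional commutative algebra over a field with nondegenerate trace
form is an étale algebra (formally étale and of finite presentation). -/
theorem stmt12 {K B : Type u} [Field K] [CommRing B] [Algebra K B]
    [FiniteDimensional K B]
    (h : (Algebra.traceForm K B).Nondegenerate) : Algebra.Etale K B := by
  have := Algebra.isReduced_of_traceForm_nondegenerate h
  have : IsArtinianRing B := .of_finite K B
  let e := (IsArtinianRing.equivPi B).restrictScalars K
  have hfactor := Algebra.traceForm_nondegenerate_of_pi
    (Algebra.traceForm_nondegenerate_of_algEquiv e h)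
  refine (Algebra.Etale.iff_exists_algEquiv_prod K B).mpr
    ⟨_, inferInstance, _, _, _, e, fun m => ⟨inferInstance, ?_⟩⟩
  exact ((traceForm_nondegenerate_tfae K _).out 2 0).mp (hfactor m)
end

section
/- Let K be a field and A a nontrivial commutative K-algebra of finite presentation that is formally unramified over K (i.e. Ω_{A/K} = 0). Then A is finite-dimensional as a K-vector space, A is an étale K-algebra, and A is trace-étale over K (its trace form is nondegenerate). In particular, a finitely presented K-algebra is unramified over K if and only if it is étale over K. -/
/-!
Over a field, a formally unramified algebra of finite type is formally étale, and by the
structure theory of étale algebras over a field it is then a finite product of finite separable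
field extensions. The trace of a product is the sum of the traces of the factors, so the trace
form of the product is the orthogonal sum of the trace forms of the factors, each of which is
nondegenerate by separability.
-/

universe u

namespace Algebra

theorem trace_pi_apply {R ι : Type*} [CommRing R] [Fintype ι] {S : ι → Type*}
    [∀ i, CommRing (S i)] [∀ i, Algebra R (S i)] [∀ i, Module.Free R (S i)]
    [∀ i, Module.Finite R (S i)] (x : ∀ i, S i) :
    trace R (∀ i, S i) x = ∑ i, trace R (S i) (x i) := by
  classical
  let b i := Module.Free.chooseBasis R (S i)
  rw [trace_eq_matrix_trace (Pi.basis b), Matrix.trace, ← Finset.univ_sigma_univ,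
    Finset.sum_sigma]
  refine Finset.sum_congr rfl fun i _ => ?_
  rw [trace_eq_matrix_trace (b i), Matrix.trace]
  refine Finset.sum_congr rfl fun j _ => ?_
  simp [Matrix.diag_apply, leftMulMatrix_eq_repr_mul, Pi.basis_apply]

theorem trace_pi_single {R ι : Type*} [CommRing R] [Fintype ι] [DecidableEq ι] {S : ι → Type*}
    [∀ i, CommRing (S i)] [∀ i, Algebra R (S i)] [∀ i, Module.Free R (S i)]
    [∀ i, Module.Finite R (S i)] (i : ι) (a : S i) :
    trace R (∀ i, S i) (Pi.single i a) = trace R (S i) a := by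
  rw [trace_pi_apply, Fintype.sum_eq_single i fun j hj => by simp [Pi.single_eq_of_ne hj],
    Pi.single_eq_same]

theorem traceForm_pi_nondegenerate {K ι : Type*} [Field K] [Fintype ι] {S : ι → Type*}
    [∀ i, CommRing (S i)] [∀ i, Algebra K (S i)] [∀ i, Module.Finite K (S i)]
    (h : ∀ i, (traceForm K (S i)).Nondegenerate) :
    (traceForm K (∀ i, S i)).Nondegenerate := by
  classical
  refine .ofSeparatingLeft fun x hx => funext fun i => (h i).1 (x i) fun a => ?_
  simpa [← Pi.single_mul_right, trace_pi_single] using hx (Pi.single i a)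

theorem traceForm_congr {R S T : Type*} [CommRing R] [CommRing S] [CommRing T] [Algebra R S]
    [Algebra R T] (e : S ≃ₐ[R] T) :
    LinearMap.BilinForm.congr e.toLinearEquiv (traceForm R S) = traceForm R T := by
  ext x y
  simp [← trace_eq_of_algEquiv e]

theorem Etale.traceForm_nondegenerate (K A : Type*) [Field K] [CommRing A] [Algebra K A]
    [Etale K A] : (traceForm K A).Nondegenerate := by
  obtain ⟨I, _, Ai, _, _, e, hAi⟩ := (Etale.iff_exists_algEquiv_prod K A).mp ‹_›
  have := Fintype.ofFinite I
  have := fun i => (hAi i).1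
  have := fun i => (hAi i).2
  rw [← traceForm_congr e.symm]
  exact (traceForm_pi_nondegenerate fun i => _root_.traceForm_nondegenerate K (Ai i)).congr _

theorem Etale.iff_formallyUnramified_of_field {K A : Type*} [Field K] [CommRing A]
    [Algebra K A] [FinitePresentation K A] : Etale K A ↔ FormallyUnramified K A :=
  ⟨fun _ => inferInstance, fun _ => ⟨.of_formallyUnramified_of_field K A, ‹_›⟩⟩

end Algebra

theorem stmt17_general {K A : Type u} [Field K] [CommRing A] [Algebra K A]
    (hfp : Algebra.FinitePresentation K A)
    (h : Subsingleton (KaehlerDifferential K A)) :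
    FiniteDimensional K A ∧ Algebra.Etale K A ∧
      (Algebra.traceForm K A).Nondegenerate ∧
      ∀ (B : Type u) [CommRing B] [Algebra K B], Algebra.FinitePresentation K B →
        (Algebra.FormallyUnramified K B ↔ Algebra.Etale K B) := by
  have : Algebra.FormallyUnramified K A := ⟨h⟩
  have : Algebra.Etale K A := Algebra.Etale.iff_formallyUnramified_of_field.mpr this
  exact ⟨Algebra.FormallyUnramified.finite_of_free K A, this,
    Algebra.Etale.traceForm_nondegenerate K A,
    fun _ _ _ _ => Algebra.Etale.iff_formallyUnramified_of_field.symm⟩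

/-- A nontrivial finitely presented commutative algebra `A` over a field `K` with
`Ω_{A/K} = 0` is finite-dimensional as a `K`-vector space, étale over `K`, and
trace-étale (nondegenerate trace form). In particular, a finitely presented
`K`-algebra is (formally) unramified over `K` iff it is étale over `K`. -/
theorem stmt17 {K A : Type u} [Field K] [CommRing A] [Nontrivial A] [Algebra K A]
    (hfp : Algebra.FinitePresentation K A)
    (h : Subsingleton (KaehlerDifferential K A)) :
    FiniteDimensional K A ∧ Algebra.Etale K A ∧
      (Algebra.traceForm K A).Nondegenerate ∧
      ∀ (B : Type u) [CommRing B] [Algebra K B], Algebra.FinitePresentation K B →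
        (Algebra.FormallyUnramified K B ↔ Algebra.Etale K B) :=
  stmt17_general hfp h
end
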